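/- Let H be a complex Hilbert space and σ a spectral family in L(H). Then the function f_σ : H ∖ {0} → ℝ ∪ {∞} satisfies: (1) f_σ is lower semicontinuous on H ∖ {0}; (2) whenever x, y, z ∈ H ∖ {0} and z lies in the linear span of {x, y}, then f_σ(z) ≤ max(f_σ(x), f_σ(y)); (3) the set {x ∈ H ∖ {0} : f_σ(x) < ∞} is dense in H ∖ {0}. -/
import Mathlib


/-- The lattice `L(H)` of closed subspaces of the Hilbert space `H`,
ordered by inclusion. -/
abbrev ClosedSub (H : Type*) [NormedAddCommGroup H] [InnerProductSpace ℂ H] : Type _ :=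
  {U : Submodule ℂ H // IsClosed (U : Set H)}

variable {H : Type*} [NormedAddCommGroup H] [InnerProductSpace ℂ H]

/-- A spectral family in `L(H)`: monotone, right continuous (each `σ(λ)` is the
intersection of the `σ(μ)`, `μ > λ`), with intersection `{0}` and closed linear
span of the union equal to `H`. -/
def IsSpectralFamily (σ : ℝ → ClosedSub H) : Prop :=
  (∀ l m : ℝ, l ≤ m → σ l ≤ σ m) ∧
  (∀ l : ℝ, ((σ l).1 : Set H) = ⋂ m ∈ Set.Ioi l, ((σ m).1 : Set H)) ∧
  (⋂ l : ℝ, ((σ l).1 : Set H)) = {0} ∧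
  (⨆ l : ℝ, (σ l).1).topologicalClosure = ⊤

/-- The function `f_σ(x) = inf {λ : x ∈ σ(λ)}` with values in `ℝ ∪ {∞}`
(`inf ∅ = ∞`). -/
noncomputable def specFun (σ : ℝ → ClosedSub H) (x : H) : WithTop ℝ :=
  sInf ((fun r : ℝ => (r : WithTop ℝ)) '' {r : ℝ | x ∈ (σ r).1})
lemma specFun_bdd {σ : ℝ → ClosedSub H} (hσ : IsSpectralFamily σ) {x : H} (hx : x ≠ 0) :
    BddBelow ((fun r : ℝ => (r : WithTop ℝ)) '' {r : ℝ | x ∈ (σ r).1}) := by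
  have hx' : x ∉ (⋂ l : ℝ, ((σ l).1 : Set H)) := by
    rw [hσ.2.2.1]; simpa using hx
  simp only [Set.mem_iInter, SetLike.mem_coe, not_forall] at hx'
  obtain ⟨l, hl⟩ := hx'
  refine ⟨(l : WithTop ℝ), ?_⟩
  rintro _ ⟨r, hr, rfl⟩
  have hlr : l ≤ r := by
    by_contra h
    push_neg at h
    exact hl (hσ.1 r l h.le hr)
  show (l : WithTop ℝ) ≤ (r : WithTop ℝ)
  exact_mod_cast hlr

lemma specFun_le_iff {σ : ℝ → ClosedSub H} (hσ : IsSpectralFamily σ) {x : H} (hx : x ≠ 0)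
    (r : ℝ) : x ∈ (σ r).1 ↔ specFun σ x ≤ (r : WithTop ℝ) := by
  constructor
  · intro h
    exact csInf_le (specFun_bdd hσ hx) ⟨r, h, rfl⟩
  · intro h
    have hne : {r : ℝ | x ∈ (σ r).1}.Nonempty := by
      by_contra he
      rw [Set.not_nonempty_iff_eq_empty] at he
      simp [specFun, he] at h
    have hmem : x ∈ (⋂ m ∈ Set.Ioi r, ((σ m).1 : Set H)) := by
      simp only [Set.mem_iInter]
      intro m hm
      have hlt : specFun σ x < (m : WithTop ℝ) :=
        lt_of_le_of_lt h (by exact_mod_cast hm)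
      by_contra hxm
      have hlb : (m : WithTop ℝ) ≤ specFun σ x := by
        refine le_csInf (hne.image _) ?_
        rintro _ ⟨s, hs, rfl⟩
        have hms : m ≤ s := by
          by_contra h'
          push_neg at h'
          exact hxm (hσ.1 s m h'.le hs)
        show (m : WithTop ℝ) ≤ (s : WithTop ℝ)
        exact_mod_cast hms
      exact absurd hlt (not_lt.2 hlb)
    rw [← hσ.2.1 r] at hmem
    exact hmem

/-- For a spectral family `σ` in `L(H)`, the function `f_σ` on `H ∖ {0}` is lower
semicontinuous, satisfies `f_σ(z) ≤ max (f_σ(x), f_σ(y))` whenever `z` lies in the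
span of `x` and `y`, and is finite on a dense subset of `H ∖ {0}`. -/
theorem specFun_observable
    {H : Type*} [NormedAddCommGroup H] [InnerProductSpace ℂ H] [CompleteSpace H]
    {σ : ℝ → ClosedSub H} (hσ : IsSpectralFamily σ) :
    LowerSemicontinuous (fun x : {x : H // x ≠ 0} => specFun σ x.1) ∧
    (∀ x y z : H, x ≠ 0 → y ≠ 0 → z ≠ 0 →
      z ∈ Submodule.span ℂ ({x, y} : Set H) →
      specFun σ z ≤ max (specFun σ x) (specFun σ y)) ∧
    Dense {x : {x : H // x ≠ 0} | specFun σ x.1 < ⊤} := by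
  refine ⟨?_, ?_, ?_⟩
  · -- lower semicontinuity
    intro x c hc
    induction c with
    | top => exact absurd hc (not_top_lt)
    | coe r =>
      have hx : x.1 ∉ ((σ r).1 : Set H) := by
        intro hmem
        exact absurd ((specFun_le_iff hσ x.2 r).1 hmem) (not_le_of_gt hc)
      have hopen : IsOpen {y : {x : H // x ≠ 0} | y.1 ∉ ((σ r).1 : Set H)} :=
        ((σ r).2.isOpen_compl).preimage continuous_subtype_val
      filter_upwards [hopen.mem_nhds hx] with y hy
      exact lt_of_not_ge fun hle => hy ((specFun_le_iff hσ y.2 r).2 hle)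
  · -- subadditivity on spans
    intro x y z hx hy hz hspan
    by_cases hM : max (specFun σ x) (specFun σ y) = ⊤
    · rw [hM]; exact le_top
    · lift max (specFun σ x) (specFun σ y) to ℝ using hM with m hm
      have hxm : x ∈ (σ m).1 :=
        (specFun_le_iff hσ hx m).2 (hm ▸ le_max_left _ _)
      have hym : y ∈ (σ m).1 :=
        (specFun_le_iff hσ hy m).2 (hm ▸ le_max_right _ _)
      have hzm : z ∈ (σ m).1 := by
        have : Submodule.span ℂ ({x, y} : Set H) ≤ (σ m).1 := by
          rw [Submodule.span_le]
          rintro w (rfl | rfl) <;> assumption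
        exact this hspan
      exact (specFun_le_iff hσ hz m).1 hzm
  · -- density
    have hdense : Dense ((⨆ l : ℝ, (σ l).1 : Submodule ℂ H) : Set H) :=
      Submodule.dense_iff_topologicalClosure_eq_top.2 hσ.2.2.2
    have hdir : Directed (· ≤ ·) (fun l : ℝ => (σ l).1) := by
      intro a b
      rcases le_total a b with h | h
      · exact ⟨b, hσ.1 a b h, le_rfl⟩
      · exact ⟨a, le_rfl, hσ.1 b a h⟩
    rw [dense_iff_inter_open]
    intro U hU hUne
    obtain ⟨V, hV, rfl⟩ := isOpen_induced_iff.1 hU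
    obtain ⟨x, hxV⟩ := hUne
    have hV' : IsOpen (V ∩ {y : H | y ≠ 0}) :=
      hV.inter (isOpen_compl_singleton)
    have hxV' : x.1 ∈ V ∩ {y : H | y ≠ 0} := ⟨hxV, x.2⟩
    obtain ⟨d, ⟨hdV, hd0⟩, hdD⟩ :=
      hdense.inter_open_nonempty _ hV' ⟨x.1, hxV'⟩
    obtain ⟨l, hl⟩ := (Submodule.mem_iSup_of_directed _ hdir).1 hdD
    refine ⟨⟨d, hd0⟩, hdV, ?_⟩
    exact lt_of_le_of_lt ((specFun_le_iff hσ hd0 l).1 hl) (WithTop.coe_lt_top l)
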